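/- Let n, k, j be integers with 1 ≤ j ≤ k and n > 2k. Then the 4×4 real matrix M whose rows (indexed ∅, c, d, cd) and columns (indexed −, v, 0, +) are given by: row ∅ = ( sqrt((n−k−j+1)(n−k−j)/((n−2j+2)(n−2j+1))), 0, sqrt(2(k−j+1)(n−k−j)/((n−2j+2)(n−2j))), sqrt((k−j+1)(k−j)/((n−2j+1)(n−2j))) ); row c = ( sqrt((k−j+1)(n−k−j+1)/((n−2j+2)(n−2j+1))), 1/sqrt(2), −(n−2k)/sqrt(2(n−2j+2)(n−2j)), −sqrt((k−j)(n−k−j)/((n−2j+1)(n−2j))) ); row d = ( sqrt((k−j+1)(n−k−j+1)/((n−2j+2)(n−2j+1))), −1/sqrt(2), −(n−2k)/sqrt(2(n−2j+2)(n−2j)), −sqrt((k−j)(n−k−j)/((n−2j+1)(n−2j))) ); row cd = ( sqrt((k−j+1)(k−j)/((n−2j+2)(n−2j+1))), 0, −sqrt(2(k−j)(n−k−j+1)/((n−2j+2)(n−2j))), sqrt((n−k−j+1)(n−k−j)/((n−2j+1)(n−2j))) ); is an orthogonal matrix, i.e., MᵀM = I₄ (equivalently, its columns form an orthonormal basis of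 ℝ⁴). -/

import Mathlib

open Real Matrix

/-- The change-of-basis matrix between the orthonormal systems `{v_−, v, v_0, v_+}`
and `{w_∅, w_c, w_d, w_{cd}}` (rows indexed `∅, c, d, cd`; columns indexed `−, v, 0, +`). -/
noncomputable def changeOfBasisMatrix (n k j : ℤ) : Matrix (Fin 4) (Fin 4) ℝ :=
  Matrix.of
    ![![Real.sqrt ((((n:ℝ) - k - j + 1) * ((n:ℝ) - k - j)) / (((n:ℝ) - 2*j + 2) * ((n:ℝ) - 2*j + 1))),
        0,
        Real.sqrt ((2 * ((k:ℝ) - j + 1) * ((n:ℝ) - k - j)) / (((n:ℝ) - 2*j + 2) * ((n:ℝ) - 2*j))),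
        Real.sqrt ((((k:ℝ) - j + 1) * ((k:ℝ) - j)) / (((n:ℝ) - 2*j + 1) * ((n:ℝ) - 2*j)))],
      ![Real.sqrt ((((k:ℝ) - j + 1) * ((n:ℝ) - k - j + 1)) / (((n:ℝ) - 2*j + 2) * ((n:ℝ) - 2*j + 1))),
        1 / Real.sqrt 2,
        -(((n:ℝ) - 2*k) / Real.sqrt (2 * ((n:ℝ) - 2*j + 2) * ((n:ℝ) - 2*j))),
        -Real.sqrt ((((k:ℝ) - j) * ((n:ℝ) - k - j)) / (((n:ℝ) - 2*j + 1) * ((n:ℝ) - 2*j)))],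
      ![Real.sqrt ((((k:ℝ) - j + 1) * ((n:ℝ) - k - j + 1)) / (((n:ℝ) - 2*j + 2) * ((n:ℝ) - 2*j + 1))),
        -(1 / Real.sqrt 2),
        -(((n:ℝ) - 2*k) / Real.sqrt (2 * ((n:ℝ) - 2*j + 2) * ((n:ℝ) - 2*j))),
        -Real.sqrt ((((k:ℝ) - j) * ((n:ℝ) - k - j)) / (((n:ℝ) - 2*j + 1) * ((n:ℝ) - 2*j)))],
      ![Real.sqrt ((((k:ℝ) - j + 1) * ((k:ℝ) - j)) / (((n:ℝ) - 2*j + 2) * ((n:ℝ) - 2*j + 1))),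
        0,
        -Real.sqrt ((2 * ((k:ℝ) - j) * ((n:ℝ) - k - j + 1)) / (((n:ℝ) - 2*j + 2) * ((n:ℝ) - 2*j))),
        Real.sqrt ((((n:ℝ) - k - j + 1) * ((n:ℝ) - k - j)) / (((n:ℝ) - 2*j + 1) * ((n:ℝ) - 2*j)))]]

/-! Put `a = k - j` and `b = n - k - j`, so that `n - 2j = a + b`. Each column of
`changeOfBasisMatrix n k j` is a column of a matrix `N` with entries polynomial in `√a`,
`√(a + 1)`, `√b`, `√(b + 1)`, divided by its length. Once the squares of these roots are
replaced by `a`, `a + 1`, `b`, `b + 1`, the identity `Nᵀ N = diag((a+b+2)(a+b+1), 2,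
2(a+b+2)(a+b), (a+b+1)(a+b))` is a polynomial computation, and normalizing pairwise
orthogonal columns makes them orthonormal. -/

theorem Matrix.transpose_mul_self_of_mul_diagonal_inv_sqrt {m n : Type*} [Fintype m] [Fintype n]
    [DecidableEq n] {N : Matrix m n ℝ} {d : n → ℝ} (hd : ∀ i, 0 < d i)
    (hN : Nᵀ * N = diagonal d) :
    (N * diagonal fun i => (√(d i))⁻¹)ᵀ * (N * diagonal fun i => (√(d i))⁻¹) = 1 := by
  rw [transpose_mul, diagonal_transpose, Matrix.mul_assoc, ← Matrix.mul_assoc Nᵀ, hN,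
    diagonal_mul_diagonal, diagonal_mul_diagonal, ← diagonal_one]
  congr 1
  funext i
  have := sqrt_pos.2 (hd i)
  field_simp
  rw [sq_sqrt (hd i).le]

theorem Real.sqrt_mul_div_eq {x y : ℝ} (hx : 0 ≤ x) (hy : 0 ≤ y) (z : ℝ) :
    √(x * y / z) = √x * √y * (√z)⁻¹ := by
  rw [sqrt_div (mul_nonneg hx hy), sqrt_mul hx, div_eq_mul_inv]

theorem Real.sqrt_two_mul_mul_div_eq {x y : ℝ} (hx : 0 ≤ x) (hy : 0 ≤ y) (u v : ℝ) :
    √(2 * x * y / (u * v)) = 2 * √x * √y * (√(2 * u * v))⁻¹ := by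
  rw [mul_assoc 2 x, sqrt_mul_div_eq zero_le_two (mul_nonneg hx hy), sqrt_mul hx, mul_assoc 2 u,
    sqrt_mul zero_le_two, mul_inv]
  field_simp
  rw [sq_sqrt zero_le_two]
  ring

/-- The intended values are `x = √a`, `x' = √(a + 1)`, `y = √b`, `y' = √(b + 1)`. -/
def unnormalizedChangeOfBasis {R : Type*} [CommRing R] (a b x x' y y' : R) :
    Matrix (Fin 4) (Fin 4) R :=
  !![y' * y, 0, 2 * x' * y, x' * x;
     x' * y', 1, a - b, -(x * y);
     x' * y', -1, a - b, -(x * y);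
     x' * x, 0, -(2 * x * y'), y' * y]

def changeOfBasisGram {R : Type*} [CommRing R] (a b : R) : Fin 4 → R :=
  ![(a + b + 2) * (a + b + 1), 2, 2 * (a + b + 2) * (a + b), (a + b + 1) * (a + b)]

theorem unnormalizedChangeOfBasis_transpose_mul_self {R : Type*} [CommRing R] {a b x x' y y' : R}
    (hx : x ^ 2 = a) (hx' : x' ^ 2 = a + 1) (hy : y ^ 2 = b) (hy' : y' ^ 2 = b + 1) :
    (unnormalizedChangeOfBasis a b x x' y y')ᵀ * unnormalizedChangeOfBasis a b x x' y y' =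
      diagonal (changeOfBasisGram a b) := by
  ext i l
  fin_cases i <;> fin_cases l <;>
    simp only [unnormalizedChangeOfBasis, changeOfBasisGram, Matrix.mul_apply, transpose_apply,
      Fin.sum_univ_four, of_apply, Fin.zero_eta, Fin.mk_one, Fin.reduceFinMk, Fin.isValue,
      cons_val_zero, cons_val_one, cons_val, diagonal_apply_eq, diagonal_apply_ne, ne_eq,
      Fin.reduceEq, not_false_eq_true, zero_ne_one, one_ne_zero] <;>
    ring_nf <;> simp only [hx, hx', hy, hy'] <;> ring

theorem changeOfBasisGram_pos {a b : ℝ} (ha : 0 ≤ a) (hb : 0 ≤ b) (hab : 0 < a + b) (i : Fin 4) :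
    0 < changeOfBasisGram a b i := by
  fin_cases i <;>
    simp only [changeOfBasisGram, Fin.zero_eta, Fin.mk_one, Fin.reduceFinMk, Fin.isValue,
      cons_val_zero, cons_val_one, cons_val] <;> nlinarith

theorem changeOfBasisMatrix_eq_mul_diagonal {n k j : ℤ} {a b : ℝ} (ha : (k : ℝ) - j = a)
    (hb : (n : ℝ) - k - j = b) (ha₀ : 0 ≤ a) (hb₀ : 0 ≤ b) :
    changeOfBasisMatrix n k j = unnormalizedChangeOfBasis a b √a √(a + 1) √b √(b + 1) *
      diagonal fun i => (√(changeOfBasisGram a b i))⁻¹ := by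
  have h2j : (n : ℝ) - 2 * j = a + b := by rw [← ha, ← hb]; ring
  have h2k : (n : ℝ) - 2 * k = b - a := by rw [← ha, ← hb]; ring
  have ha₁ : 0 ≤ a + 1 := by linarith
  have hb₁ : 0 ≤ b + 1 := by linarith
  rw [changeOfBasisMatrix, h2j, h2k, ha, hb]
  simp only [sqrt_mul_div_eq hb₁ hb₀, sqrt_mul_div_eq ha₁ hb₁, sqrt_mul_div_eq ha₁ ha₀,
    sqrt_mul_div_eq ha₀ hb₀, sqrt_two_mul_mul_div_eq ha₁ hb₀, sqrt_two_mul_mul_div_eq ha₀ hb₁]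
  ext i l
  fin_cases i <;> fin_cases l <;>
    simp only [mul_diagonal, unnormalizedChangeOfBasis, changeOfBasisGram, of_apply, Fin.zero_eta,
      Fin.mk_one, Fin.reduceFinMk, Fin.isValue, cons_val_zero, cons_val_one, cons_val] <;> ring

theorem changeOfBasisMatrix_orthogonal_general (n k j : ℤ) (hjk : j ≤ k)
    (hn : 2 * k < n) :
    (changeOfBasisMatrix n k j)ᵀ * changeOfBasisMatrix n k j = 1 := by
  have ha : (0 : ℝ) ≤ k - j := sub_nonneg.2 (by exact_mod_cast hjk)
  have hab : (k : ℝ) - j < n - k - j := by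
    have : (2 * k : ℝ) < n := by exact_mod_cast hn
    linarith
  have hb : (0 : ℝ) ≤ n - k - j := by linarith
  rw [changeOfBasisMatrix_eq_mul_diagonal rfl rfl ha hb]
  exact transpose_mul_self_of_mul_diagonal_inv_sqrt (changeOfBasisGram_pos ha hb (by linarith))
    (unnormalizedChangeOfBasis_transpose_mul_self (sq_sqrt ha) (sq_sqrt (by linarith))
      (sq_sqrt hb) (sq_sqrt (by linarith)))

/-- The change-of-basis matrix is orthogonal: `MᵀM = I₄`, i.e. its columns form an
orthonormal basis of `ℝ⁴`. -/
theorem changeOfBasisMatrix_orthogonal (n k j : ℤ) (hj1 : 1 ≤ j) (hjk : j ≤ k)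
    (hn : 2 * k < n) :
    (changeOfBasisMatrix n k j)ᵀ * changeOfBasisMatrix n k j = 1 :=
  changeOfBasisMatrix_orthogonal_general n k j hjk hn
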